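/- For every T > 0, the integral ∫_{(0,∞)^p} ψ(2Tw₁, …, 2Tw_p) ρ(dw₁,…,dw_p) is finite and strictly positive. -/

import Mathlib

open MeasureTheory Real Filter ENNReal

/-- The Lévy measure of a generalized gamma process: the measure on `(0,∞)` with density
`w ↦ w^(-1-σ) * exp(-τ*w) / Γ(1-σ)` with respect to Lebesgue measure. -/
noncomputable def rho0 (σ τ : ℝ) : Measure ℝ :=
  ((volume : Measure ℝ).restrict (Set.Ioi 0)).withDensity
    (fun w => ENNReal.ofReal (w ^ (-1 - σ) * Real.exp (-τ * w) / Real.Gamma (1 - σ)))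

/-- The Gamma(a,b) probability measure on `(0,∞)`, with density
`x ↦ b^a x^(a−1) e^(−b x) / Γ(a)` with respect to Lebesgue measure. -/
noncomputable def gammaM (a b : ℝ) : Measure ℝ :=
  ((volume : Measure ℝ).restrict (Set.Ioi 0)).withDensity
    (fun x => ENNReal.ofReal (b ^ a * x ^ (a - 1) * Real.exp (-b * x) / Real.Gamma a))

/-- The multivariate Lévy measure `ρ` of the compound CRM with independent gamma scores:
the pushforward of `ρ₀ ⊗ Gamma(a₁,b₁) ⊗ ⋯ ⊗ Gamma(a_p,b_p)` under
`(w₀, β₁, …, β_p) ↦ (w₀β₁, …, w₀β_p)`. -/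
noncomputable def rhoC (σ τ : ℝ) (p : ℕ) (a b : Fin p → ℝ) : Measure (Fin p → ℝ) :=
  Measure.map (fun x : ℝ × (Fin p → ℝ) => fun k => x.1 * x.2 k)
    ((rho0 σ τ).prod (Measure.pi fun k => gammaM (a k) (b k)))

/-- The Laplace exponent `ψ(t) = ∫ (1 − e^{−Σ_k t_k v_k}) ρ(dv)` of the compound CRM,
as a lower integral in `ℝ≥0∞`. -/
noncomputable def psiE (σ τ : ℝ) (p : ℕ) (a b : Fin p → ℝ) (t : Fin p → ℝ) : ℝ≥0∞ :=
  ∫⁻ v, ENNReal.ofReal (1 - Real.exp (-∑ k, t k * v k)) ∂(rhoC σ τ p a b)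

/-! Since `1 - e^{-x} ≤ x`, the Laplace exponent of a measure carried by the positive orthant
satisfies `ψ(t) ≤ ∑ₖ tₖ ∫ vₖ ρ(dv)`, so `∫ ψ(2Tw) ρ(dw) ≤ 2T ∑ₖ (∫ vₖ ρ(dv))²`. The first moments
of `ρ` factor as `∫ w ρ₀(dw) · ∫ x Gamma(aₖ,bₖ)(dx)`, and `∫ w ρ₀(dw)` is finite because the
density `w^{-σ} e^{-τw}` is integrable at `0` for `σ < 1` and at `∞` for `τ > 0`. Conversely `ρ`
is a nonzero measure carried by the open orthant, on which `ψ(2Tw) > 0`. -/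

open Set ProbabilityTheory

lemma lintegral_pos_of_ae_pos {α : Type*} [MeasurableSpace α] {μ : Measure α} {f : α → ℝ≥0∞}
    (hf : AEMeasurable f μ) (hμ : μ ≠ 0) (hpos : ∀ᵐ x ∂μ, 0 < f x) : 0 < ∫⁻ x, f x ∂μ := by
  refine pos_iff_ne_zero.2 fun h => hμ (ae_eq_bot.1 (eventually_false_iff_eq_bot.1 ?_))
  filter_upwards [(lintegral_eq_zero_iff' hf).1 h, hpos] with x hx0 hx
  exact hx.ne' hx0

section LaplaceExponent

variable {ι : Type*} [Fintype ι] {μ : Measure (ι → ℝ)}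

noncomputable def laplaceExponent (μ : Measure (ι → ℝ)) (t : ι → ℝ) : ℝ≥0∞ :=
  ∫⁻ v, ENNReal.ofReal (1 - exp (-∑ k, t k * v k)) ∂μ

lemma measurable_laplaceExponent [SFinite μ] : Measurable (laplaceExponent μ) :=
  Measurable.lintegral_prod_right'
    (f := fun q : (ι → ℝ) × (ι → ℝ) => ENNReal.ofReal (1 - exp (-∑ k, q.1 k * q.2 k)))
    (by fun_prop)

lemma laplaceExponent_pos [Nonempty ι] (hμ : μ ≠ 0) (hpos : ∀ᵐ v ∂μ, ∀ k, 0 < v k)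
    {t : ι → ℝ} (ht : ∀ k, 0 < t k) : 0 < laplaceExponent μ t := by
  refine lintegral_pos_of_ae_pos (by fun_prop : Measurable _).aemeasurable hμ ?_
  filter_upwards [hpos] with v hv
  have hsum : 0 < ∑ k, t k * v k :=
    Finset.sum_pos (fun k _ => mul_pos (ht k) (hv k)) Finset.univ_nonempty
  simpa [ENNReal.ofReal_pos, sub_pos] using hsum

lemma laplaceExponent_le (hnonneg : ∀ᵐ v ∂μ, ∀ k, 0 ≤ v k) (t : ι → ℝ) :
    laplaceExponent μ t ≤ ∑ k, ENNReal.ofReal (t k) * ∫⁻ v, ENNReal.ofReal (v k) ∂μ := by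
  calc laplaceExponent μ t
      ≤ ∫⁻ v, ∑ k, ENNReal.ofReal (t k) * ENNReal.ofReal (v k) ∂μ := by
        refine lintegral_mono_ae ?_
        filter_upwards [hnonneg] with v hv
        calc ENNReal.ofReal (1 - exp (-∑ k, t k * v k))
            ≤ ENNReal.ofReal (∑ k, t k * v k) := ENNReal.ofReal_le_ofReal <| by
              linarith [add_one_le_exp (-∑ k, t k * v k)]
          _ ≤ ∑ k, ENNReal.ofReal (t k * v k) :=
            Finset.le_sum_of_subadditive _ ENNReal.ofReal_zero.le
              (fun _ _ => ENNReal.ofReal_add_le) _ _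
          _ = ∑ k, ENNReal.ofReal (t k) * ENNReal.ofReal (v k) := by
            simp_rw [ENNReal.ofReal_mul' (hv _)]
    _ = ∑ k, ENNReal.ofReal (t k) * ∫⁻ v, ENNReal.ofReal (v k) ∂μ := by
        rw [lintegral_finsetSum _ fun k _ => by fun_prop]
        exact Finset.sum_congr rfl fun k _ => lintegral_const_mul _ (by fun_prop)

lemma lintegral_laplaceExponent_mul_pos [Nonempty ι] [SFinite μ] (hμ : μ ≠ 0)
    (hpos : ∀ᵐ v ∂μ, ∀ k, 0 < v k) {c : ℝ} (hc : 0 < c) :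
    0 < ∫⁻ w, laplaceExponent μ (fun k => c * w k) ∂μ := by
  have hmeas : Measurable fun w : ι → ℝ => laplaceExponent μ (fun k => c * w k) :=
    measurable_laplaceExponent.comp (by fun_prop)
  refine lintegral_pos_of_ae_pos hmeas.aemeasurable hμ ?_
  filter_upwards [hpos] with w hw
  exact laplaceExponent_pos hμ hpos fun k => mul_pos hc (hw k)

lemma lintegral_laplaceExponent_mul_lt_top (hnonneg : ∀ᵐ v ∂μ, ∀ k, 0 ≤ v k)
    (hmoment : ∀ k, ∫⁻ v, ENNReal.ofReal (v k) ∂μ < ⊤) {c : ℝ} (hc : 0 ≤ c) :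
    ∫⁻ w, laplaceExponent μ (fun k => c * w k) ∂μ < ⊤ := by
  set m : ι → ℝ≥0∞ := fun k => ∫⁻ v, ENNReal.ofReal (v k) ∂μ
  calc ∫⁻ w, laplaceExponent μ (fun k => c * w k) ∂μ
      ≤ ∫⁻ w, ∑ k, ENNReal.ofReal c * ENNReal.ofReal (w k) * m k ∂μ :=
        lintegral_mono fun w => (laplaceExponent_le hnonneg _).trans_eq <| by
          simp_rw [ENNReal.ofReal_mul hc]
          rfl
    _ = ∑ k, ENNReal.ofReal c * m k * m k := by
        rw [lintegral_finsetSum _ fun k _ => by fun_prop]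
        refine Finset.sum_congr rfl fun k _ => ?_
        simp_rw [mul_right_comm _ _ (m k)]
        rw [lintegral_const_mul _ (by fun_prop)]
    _ < ⊤ := ENNReal.sum_lt_top.2 fun k _ =>
        ENNReal.mul_lt_top (ENNReal.mul_lt_top ENNReal.ofReal_lt_top (hmoment k)) (hmoment k)

end LaplaceExponent

lemma measurable_scale {ι : Type*} : Measurable fun x : ℝ × (ι → ℝ) => fun k => x.1 * x.2 k := by
  fun_prop

section ScaleMixture

variable {ι : Type*} [Fintype ι] {μ : Measure ℝ} {ν : ι → Measure ℝ}

noncomputable def scaleMixture (μ : Measure ℝ) (ν : ι → Measure ℝ) : Measure (ι → ℝ) :=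
  (μ.prod (Measure.pi ν)).map fun x => fun k => x.1 * x.2 k

instance [SFinite μ] [∀ k, SigmaFinite (ν k)] : SFinite (scaleMixture μ ν) := by
  unfold scaleMixture
  infer_instance

lemma ae_pos_scaleMixture [SFinite μ] [∀ k, SigmaFinite (ν k)] (hμ : ∀ᵐ w ∂μ, 0 < w)
    (hν : ∀ k, ∀ᵐ x ∂ν k, 0 < x) : ∀ᵐ v ∂scaleMixture μ ν, ∀ k, 0 < v k := by
  have hpi : ∀ᵐ y ∂Measure.pi ν, ∀ k, 0 < y k :=
    eventually_all.2 fun k => Measure.tendsto_eval_ae_ae.eventually (hν k)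
  rw [scaleMixture, ae_map_iff measurable_scale.aemeasurable (by measurability)]
  filter_upwards [Measure.quasiMeasurePreserving_fst.tendsto_ae.eventually hμ,
    Measure.quasiMeasurePreserving_snd.tendsto_ae.eventually hpi] with x h₁ h₂ k
  exact mul_pos h₁ (h₂ k)

lemma scaleMixture_ne_zero [SFinite μ] [∀ k, IsProbabilityMeasure (ν k)] (hμ : μ ≠ 0) :
    scaleMixture μ ν ≠ 0 := by
  rw [scaleMixture, Ne, Measure.map_eq_zero_iff measurable_scale.aemeasurable]
  intro h
  have := Measure.map_fst_prod (μ := μ) (ν := Measure.pi ν)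
  rw [h, Measure.map_zero, measure_univ, one_smul] at this
  exact hμ this.symm

lemma lintegral_ofReal_apply_scaleMixture [SFinite μ] [∀ k, IsProbabilityMeasure (ν k)]
    (hμ : ∀ᵐ w ∂μ, 0 ≤ w) (k : ι) :
    ∫⁻ v, ENNReal.ofReal (v k) ∂scaleMixture μ ν =
      (∫⁻ w, ENNReal.ofReal w ∂μ) * ∫⁻ x, ENNReal.ofReal x ∂ν k := by
  calc ∫⁻ v, ENNReal.ofReal (v k) ∂scaleMixture μ ν
      = ∫⁻ x, ENNReal.ofReal x.1 * ENNReal.ofReal (x.2 k) ∂μ.prod (Measure.pi ν) := by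
        rw [scaleMixture, lintegral_map (by fun_prop) measurable_scale]
        refine lintegral_congr_ae ?_
        filter_upwards [Measure.quasiMeasurePreserving_fst.tendsto_ae.eventually hμ] with x hx
        exact ENNReal.ofReal_mul hx
    _ = (∫⁻ w, ENNReal.ofReal w ∂μ) * ∫⁻ y, ENNReal.ofReal (y k) ∂Measure.pi ν :=
        lintegral_prod_mul (g := fun y : ι → ℝ => ENNReal.ofReal (y k))
          measurable_ofReal.aemeasurable (by fun_prop : Measurable _).aemeasurable
    _ = (∫⁻ w, ENNReal.ofReal w ∂μ) * ∫⁻ x, ENNReal.ofReal x ∂ν k := by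
        rw [← (measurePreserving_eval ν k).lintegral_comp measurable_ofReal]

end ScaleMixture

section DensityOnIoi

lemma integrableOn_rpow_mul_exp_neg_mul_Ioi {s b : ℝ} (hs : -1 < s) (hb : 0 < b) :
    IntegrableOn (fun x : ℝ => x ^ s * exp (-b * x)) (Ioi 0) := by
  simpa only [Real.rpow_one] using integrableOn_rpow_mul_exp_neg_mul_rpow hs one_pos hb

lemma ae_pos_withDensity_restrict_Ioi (f : ℝ → ℝ≥0∞) :
    ∀ᵐ x ∂((volume : Measure ℝ).restrict (Ioi 0)).withDensity f, 0 < x :=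
  (withDensity_absolutelyContinuous _ _).ae_le (ae_restrict_mem measurableSet_Ioi)

lemma lintegral_ofReal_withDensity_restrict_Ioi_lt_top {g : ℝ → ℝ} (hg : Measurable g)
    (hint : IntegrableOn (fun x => g x * x) (Ioi 0)) :
    ∫⁻ x, ENNReal.ofReal x ∂((volume : Measure ℝ).restrict (Ioi 0)).withDensity
      (fun x => ENNReal.ofReal (g x)) < ⊤ := by
  rw [lintegral_withDensity_eq_lintegral_mul _ (by fun_prop) measurable_ofReal]
  simp only [Pi.mul_apply]
  rw [setLIntegral_congr_fun measurableSet_Ioi fun x (hx : 0 < x) =>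
    (ENNReal.ofReal_mul' hx.le).symm]
  exact hint.lintegral_lt_top

end DensityOnIoi

section GeneralizedGamma

variable {σ τ : ℝ}

instance : SFinite (rho0 σ τ) := by
  unfold rho0
  infer_instance

lemma rho0_ae_pos : ∀ᵐ w ∂rho0 σ τ, 0 < w := ae_pos_withDensity_restrict_Ioi _

lemma rho0_ne_zero (hσ : σ < 1) : rho0 σ τ ≠ 0 := by
  have hΓ : 0 < Gamma (1 - σ) := Gamma_pos_of_pos (by linarith)
  rw [← Measure.measure_univ_pos, rho0, withDensity_apply _ MeasurableSet.univ,
    Measure.restrict_univ]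
  refine lintegral_pos_of_ae_pos (by fun_prop : Measurable _).aemeasurable
    (by simp [Measure.restrict_eq_zero]) ?_
  filter_upwards [ae_restrict_mem measurableSet_Ioi] with w (hw : 0 < w)
  exact ENNReal.ofReal_pos.2 (by positivity)

lemma lintegral_ofReal_rho0_lt_top (hσ : σ < 1) (hτ : 0 < τ) :
    ∫⁻ w, ENNReal.ofReal w ∂rho0 σ τ < ⊤ := by
  refine lintegral_ofReal_withDensity_restrict_Ioi_lt_top (by fun_prop) <|
    IntegrableOn.congr_fun ((integrableOn_rpow_mul_exp_neg_mul_Ioi (by linarith : -1 < -σ)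
      hτ).const_mul (Gamma (1 - σ))⁻¹) (fun w (hw : 0 < w) => ?_) measurableSet_Ioi
  rw [show -1 - σ = -σ - 1 by ring, rpow_sub_one hw.ne']
  field_simp

end GeneralizedGamma

section Gamma

variable {a b : ℝ}

lemma gammaM_eq_gammaMeasure (a b : ℝ) : gammaM a b = gammaMeasure a b := by
  rw [gammaM, gammaMeasure, restrict_Ioi_eq_restrict_Ici,
    ← withDensity_indicator measurableSet_Ici]
  congr 1
  funext x
  by_cases hx : 0 ≤ x
  · rw [indicator_of_mem (mem_Ici.2 hx), gammaPDF_of_nonneg hx, neg_mul]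
    congr 1
    ring
  · rw [indicator_of_notMem (notMem_Ici.2 (not_le.1 hx)), gammaPDF_of_neg (not_le.1 hx)]

lemma isProbabilityMeasure_gammaM (ha : 0 < a) (hb : 0 < b) :
    IsProbabilityMeasure (gammaM a b) :=
  gammaM_eq_gammaMeasure a b ▸ isProbabilityMeasure_gammaMeasure ha hb

lemma gammaM_ae_pos : ∀ᵐ x ∂gammaM a b, 0 < x := ae_pos_withDensity_restrict_Ioi _

lemma lintegral_ofReal_gammaM_lt_top (ha : -1 < a) (hb : 0 < b) :
    ∫⁻ x, ENNReal.ofReal x ∂gammaM a b < ⊤ := by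
  refine lintegral_ofReal_withDensity_restrict_Ioi_lt_top (by fun_prop) <|
    IntegrableOn.congr_fun ((integrableOn_rpow_mul_exp_neg_mul_Ioi ha hb).const_mul
      (b ^ a / Gamma a)) (fun x (hx : 0 < x) => ?_) measurableSet_Ioi
  rw [rpow_sub_one hx.ne']
  field_simp

end Gamma

/-- For every `T > 0`, `∫ ψ(2Tw₁,…,2Tw_p) ρ(dw)` is finite and strictly positive.
By `E[E_{α,T}] = (α²/2) ∫ ψ(2Tw) ρ(dw)`, this gives `E[E_{α,T}] = Θ(α²)` as `α → ∞`. -/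
theorem edges_integral_finite_positive (σ τ : ℝ) (hσ : σ < 1) (hτ : 0 < τ) (p : ℕ)
    (hp : 1 ≤ p) (a b : Fin p → ℝ) (ha : ∀ k, 0 < a k) (hb : ∀ k, 0 < b k)
    (T : ℝ) (hT : 0 < T) :
    0 < (∫⁻ w, psiE σ τ p a b (fun k => 2 * T * w k) ∂(rhoC σ τ p a b)) ∧
    (∫⁻ w, psiE σ τ p a b (fun k => 2 * T * w k) ∂(rhoC σ τ p a b)) < ⊤ := by
  have : Nonempty (Fin p) := ⟨⟨0, hp⟩⟩
  have := fun k => isProbabilityMeasure_gammaM (ha k) (hb k)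
  have hrhoC : rhoC σ τ p a b = scaleMixture (rho0 σ τ) fun k => gammaM (a k) (b k) := rfl
  have hpos : ∀ᵐ v ∂rhoC σ τ p a b, ∀ k, 0 < v k :=
    ae_pos_scaleMixture rho0_ae_pos fun _ => gammaM_ae_pos
  have hmoment : ∀ k, ∫⁻ v, ENNReal.ofReal (v k) ∂rhoC σ τ p a b < ⊤ := fun k => by
    rw [hrhoC, lintegral_ofReal_apply_scaleMixture (rho0_ae_pos.mono fun _ => le_of_lt)]
    exact ENNReal.mul_lt_top (lintegral_ofReal_rho0_lt_top hσ hτ)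
      (lintegral_ofReal_gammaM_lt_top (by linarith [ha k]) (hb k))
  exact ⟨lintegral_laplaceExponent_mul_pos (scaleMixture_ne_zero (rho0_ne_zero hσ)) hpos
      (by positivity),
    lintegral_laplaceExponent_mul_lt_top (hpos.mono fun _ hv k => (hv k).le) hmoment
      (by positivity)⟩
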